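/- arXiv:cs/0610106 — 3 statements merged into one kernel-verified Lean document; each statement's English description precedes it below -/
import Mathlib

section
/- Let C > 0 and define E_F(R) = (C − R) + (√C − √R)² for 0 ≤ R ≤ C, and E_r(R) = C/2 − R for 0 ≤ R ≤ C/4, E_r(R) = (√C − √R)² for C/4 ≤ R ≤ C. Then for all R ∈ [0, C], E_F(R) ≤ 4·E_r(R/4), and hence min{E_F(R), 4·E_r(R/4)} = E_F(R). -/
theorem vnc_L4_achieves_feedback (C : ℝ) (hC : 0 < C) (Er EF : ℝ → ℝ)
    (hEF : ∀ R, 0 ≤ R → R ≤ C → EF R = (C - R) + (Real.sqrt C - Real.sqrt R) ^ 2)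
    (h1 : ∀ R, 0 ≤ R → R ≤ C / 4 → Er R = C / 2 - R)
    (h2 : ∀ R, C / 4 ≤ R → R ≤ C → Er R = (Real.sqrt C - Real.sqrt R) ^ 2) :
    ∀ R ∈ Set.Icc (0 : ℝ) C, EF R ≤ 4 * Er (R / 4) ∧
      min (EF R) (4 * Er (R / 4)) = EF R := by
  rintro R ⟨hR0, hRC⟩
  have hEr : Er (R / 4) = C / 2 - R / 4 := h1 _ (by linarith) (by linarith)
  have hsq : (Real.sqrt C - Real.sqrt R) ^ 2 ≤ C := by
    have h1' : Real.sqrt R ≤ Real.sqrt C := Real.sqrt_le_sqrt hRC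
    have h2' : 0 ≤ Real.sqrt R := Real.sqrt_nonneg R
    have h3' : (Real.sqrt C - Real.sqrt R) ^ 2 ≤ Real.sqrt C ^ 2 := by
      apply sq_le_sq' <;> nlinarith
    rwa [Real.sq_sqrt hC.le] at h3'
  have hle : EF R ≤ 4 * Er (R / 4) := by
    rw [hEF R hR0 hRC, hEr]; linarith
  exact ⟨hle, min_eq_left hle⟩
end

section
/- Define, for ε ∈ (0, 1/2], E_r(0) = ln 2 − ln(1 + 2√(ε(1−ε))) and E_F(0) = C − ln 2 − ln(√(ε(1−ε))), where C = ln 2 + ε ln ε + (1−ε) ln(1−ε) is the capacity (in nats) of the binary symmetric channel with crossover probability ε. Then for all ε with 0.05 ≤ ε ≤ 1/2, 4·E_r(0) ≥ E_F(0). -/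
/-!
Put `ε = (1 - v)² / (2 (1 + v²))`, i.e. `v = (√(1 - ε) - √ε) / (√(1 - ε) + √ε)`. Then
`√(ε (1 - ε)) = (1 - v²) / (2 (1 + v²))` and `1 - 2ε = 2v / (1 + v²)`, so that
`E_r(0) = log (1 + v²)` and `E_F(0) = 2v / (1 + v²) · log ((1 + v) / (1 - v))`, and the claim
becomes `v log ((1 + v) / (1 - v)) ≤ 2 (1 + v²) log (1 + v²)`, while `ε ≥ 0.05` means
`v ≤ 0.6268`. In `t = v²` the left side is `∑ 2 t^(k+1) / (2k + 1)`, which we bound by a partial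
sum plus a geometric tail; `log (1 + t)` is bounded below by an even partial sum of its alternating
series. What remains is a polynomial inequality on `0 ≤ t ≤ 0.3929`. The inequality is tight:
its margin at `ε = 0.05` is only about `3 · 10⁻⁴`, which dictates the truncation orders.
-/

open Real Finset

noncomputable def zeroRateRandomCodingExponent (ε : ℝ) : ℝ :=
  log 2 - log (1 + 2 * √(ε * (1 - ε)))

noncomputable def zeroRateFeedbackExponent (ε : ℝ) : ℝ :=
  (log 2 + ε * log ε + (1 - ε) * log (1 - ε)) - log 2 - log √(ε * (1 - ε))

noncomputable def bscCrossover (v : ℝ) : ℝ := (1 - v) ^ 2 / (2 * (1 + v ^ 2))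

theorem exists_bscCrossover_eq {ε : ℝ} (h0 : 0 < ε) (h1 : ε ≤ 1 / 2) :
    ∃ v : ℝ, 0 ≤ v ∧ v < 1 ∧ bscCrossover v = ε := by
  have ha : 0 < √ε := sqrt_pos.2 h0
  have hb : 0 < √(1 - ε) := sqrt_pos.2 (by linarith)
  have hab : √ε ≤ √(1 - ε) := sqrt_le_sqrt (by linarith)
  have ha2 : √ε ^ 2 = ε := sq_sqrt h0.le
  have hb2 : √(1 - ε) ^ 2 = 1 - ε := sq_sqrt (by linarith)
  refine ⟨(√(1 - ε) - √ε) / (√(1 - ε) + √ε), div_nonneg (by linarith) (by linarith),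
    (div_lt_one (by linarith)).2 (by linarith), ?_⟩
  rw [bscCrossover]
  field_simp
  linear_combination (4 - 4 * ε) * ha2 - 4 * ε * hb2

theorem le_of_le_bscCrossover {v : ℝ} (hv : v < 1) (h : 0.05 ≤ bscCrossover v) :
    v ≤ 0.6268 := by
  rw [bscCrossover, le_div_iff₀ (by positivity)] at h
  nlinarith

theorem one_sub_bscCrossover (v : ℝ) :
    1 - bscCrossover v = (1 + v) ^ 2 / (2 * (1 + v ^ 2)) := by
  rw [bscCrossover]
  field_simp
  ring

theorem sqrt_bscCrossover_mul_one_sub {v : ℝ} (hv : v ^ 2 ≤ 1) :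
    √(bscCrossover v * (1 - bscCrossover v)) = (1 - v ^ 2) / (2 * (1 + v ^ 2)) := by
  rw [← sqrt_sq (div_nonneg (sub_nonneg.2 hv) (by positivity)), one_sub_bscCrossover,
    bscCrossover]
  congr 1
  field_simp
  ring

theorem zeroRateRandomCodingExponent_bscCrossover {v : ℝ} (hv : v ^ 2 ≤ 1) :
    zeroRateRandomCodingExponent (bscCrossover v) = log (1 + v ^ 2) := by
  have h : 1 + 2 * √(bscCrossover v * (1 - bscCrossover v)) = 2 / (1 + v ^ 2) := by
    rw [sqrt_bscCrossover_mul_one_sub hv]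
    field_simp
    ring
  rw [zeroRateRandomCodingExponent, h, log_div two_ne_zero (by positivity)]
  ring

theorem zeroRateFeedbackExponent_bscCrossover {v : ℝ} (hv0 : -1 < v) (hv1 : v < 1) :
    zeroRateFeedbackExponent (bscCrossover v) =
      2 * v / (1 + v ^ 2) * (log (1 + v) - log (1 - v)) := by
  have hm : 2 * (1 + v ^ 2) ≠ 0 := by positivity
  have hlog : log (bscCrossover v) = 2 * log (1 - v) - log (2 * (1 + v ^ 2)) := by
    rw [bscCrossover, log_div (by nlinarith) hm, log_pow]; push_cast; ring
  have hlog' : log (1 - bscCrossover v) = 2 * log (1 + v) - log (2 * (1 + v ^ 2)) := by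
    rw [one_sub_bscCrossover, log_div (by nlinarith) hm, log_pow]; push_cast; ring
  have hlog_sqrt : log √(bscCrossover v * (1 - bscCrossover v)) =
      log (1 - v) + log (1 + v) - log (2 * (1 + v ^ 2)) := by
    rw [sqrt_bscCrossover_mul_one_sub (by nlinarith), log_div (by nlinarith) hm,
      show 1 - v ^ 2 = (1 - v) * (1 + v) by ring, log_mul (by linarith) (by linarith)]
  have hcoef : 1 - 2 * bscCrossover v = 2 * v / (1 + v ^ 2) := by
    rw [bscCrossover]; field_simp; ring
  rw [zeroRateFeedbackExponent, hlog, hlog', hlog_sqrt, ← hcoef]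
  ring

theorem mul_log_one_add_sub_log_one_sub_le {v : ℝ} (h0 : 0 ≤ v) (h1 : v < 1) (n : ℕ) :
    v * (log (1 + v) - log (1 - v)) ≤
      ∑ k ∈ range n, 2 * (v ^ 2) ^ (k + 1) / (2 * k + 1) +
        2 * (v ^ 2) ^ (n + 1) / ((2 * n + 1) * (1 - v ^ 2)) := by
  have hv2 : v ^ 2 < 1 := by nlinarith
  have hs : HasSum (fun k : ℕ => 2 * (v ^ 2) ^ (k + 1) / (2 * k + 1))
      (v * (log (1 + v) - log (1 - v))) :=
    ((hasSum_log_sub_log_of_abs_lt_one (abs_lt.2 ⟨by linarith, h1⟩)).mul_left v).congr_fun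
      fun k => by ring
  have hgeom : HasSum (fun k : ℕ => 2 * (v ^ 2) ^ (n + 1) / (2 * n + 1) * (v ^ 2) ^ k)
      (2 * (v ^ 2) ^ (n + 1) / ((2 * n + 1) * (1 - v ^ 2))) := by
    rw [← div_div, div_eq_mul_inv _ (1 - v ^ 2)]
    exact (hasSum_geometric_of_lt_one (by positivity) hv2).mul_left _
  have htail := hasSum_le (fun k => ?_) ((hasSum_nat_add_iff' n).2 hs) hgeom
  · rwa [sub_le_iff_le_add'] at htail
  · calc 2 * (v ^ 2) ^ (k + n + 1) / (2 * (k + n : ℕ) + 1)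
        = 2 * ((v ^ 2) ^ (n + 1) * (v ^ 2) ^ k) / (2 * (k + n : ℕ) + 1) := by ring
      _ ≤ 2 * ((v ^ 2) ^ (n + 1) * (v ^ 2) ^ k) / (2 * n + 1) := by
        gcongr
        omega
      _ = _ := by ring

theorem alternating_sum_le_log_one_add {t : ℝ} (h0 : 0 ≤ t) (h1 : t < 1) (k : ℕ) :
    ∑ i ∈ range (2 * k), (-1) ^ i * (t ^ (i + 1) / (i + 1)) ≤ log (1 + t) := by
  have hs : HasSum (fun i : ℕ => (-1) ^ i * (t ^ (i + 1) / (i + 1))) (log (1 + t)) := by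
    have h := (hasSum_pow_div_log_of_abs_lt_one (x := -t)
      (by rwa [abs_neg, abs_of_nonneg h0])).neg
    rw [sub_neg_eq_add, neg_neg] at h
    exact h.congr_fun fun i => by rw [neg_pow, pow_succ]; ring
  refine Antitone.alternating_series_le_tendsto hs.tendsto_sum_nat
    (antitone_nat_of_succ_le fun i => ?_) k
  push_cast
  gcongr ?_ / ?_
  · exact pow_le_pow_of_le_one h0 h1.le (by omega)
  · linarith

theorem artanh_truncation_le_log_truncation {t : ℝ} (h0 : 0 ≤ t) (h1 : t ≤ 0.3929) :
    2 * t + 2 * t ^ 2 / 3 + 2 * t ^ 3 / 5 + 2 * t ^ 4 / 7 + 2 * t ^ 5 / 9 + 2 * t ^ 6 / 11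
        + 2 * t ^ 7 / (13 * 0.6)
      ≤ 2 * (1 + t) * (t - t ^ 2 / 2 + t ^ 3 / 3 - t ^ 4 / 4 + t ^ 5 / 5 - t ^ 6 / 6
        + t ^ 7 / 7 - t ^ 8 / 8) := by
  -- the difference is `t²` times this polynomial, whose coefficients past the first are
  -- all negative except that of `t⁶`
  have hR : 0 ≤ 1 / 3 - 11 / 15 * t - 5 / 42 * t ^ 2 - 29 / 90 * t ^ 3 - 19 / 165 * t ^ 4
      - 83 / 273 * t ^ 5 + 1 / 28 * t ^ 6 - 1 / 4 * t ^ 7 := by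
    have hpow (k : ℕ) : t ^ k ≤ 0.3929 ^ k := pow_le_pow_left₀ h0 h1 k
    linarith [hpow 2, hpow 3, hpow 4, hpow 5, hpow 7, pow_nonneg h0 6]
  have hD := mul_nonneg (sq_nonneg t) hR
  ring_nf at hD ⊢
  linarith

theorem mul_log_one_add_sub_log_one_sub_le_two_mul_log_one_add_sq {v : ℝ} (h0 : 0 ≤ v)
    (h1 : v ≤ 0.6268) :
    v * (log (1 + v) - log (1 - v)) ≤ 2 * (1 + v ^ 2) * log (1 + v ^ 2) := by
  have hA := mul_log_one_add_sub_log_one_sub_le h0 (by linarith) 6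
  set t := v ^ 2
  have ht0 : 0 ≤ t := sq_nonneg v
  have ht1 : t ≤ 0.3929 := by nlinarith
  have hL := alternating_sum_le_log_one_add ht0 (by linarith) 4
  simp only [sum_range_succ, sum_range_zero] at hA hL
  norm_num at hA hL
  have htail : 2 * t ^ 7 / (13 * (1 - t)) ≤ 2 * t ^ 7 / (13 * 0.6) := by
    gcongr
    linarith
  calc v * (log (1 + v) - log (1 - v))
      ≤ 2 * t + 2 * t ^ 2 / 3 + 2 * t ^ 3 / 5 + 2 * t ^ 4 / 7 + 2 * t ^ 5 / 9 + 2 * t ^ 6 / 11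
        + 2 * t ^ 7 / (13 * 0.6) := by linarith
    _ ≤ 2 * (1 + t) * (t - t ^ 2 / 2 + t ^ 3 / 3 - t ^ 4 / 4 + t ^ 5 / 5 - t ^ 6 / 6
        + t ^ 7 / 7 - t ^ 8 / 8) := artanh_truncation_le_log_truncation ht0 ht1
    _ ≤ 2 * (1 + t) * log (1 + t) := by gcongr; linarith

theorem bsc_L4_zero_rate (ε : ℝ) (h1 : 0.05 ≤ ε) (h2 : ε ≤ 1 / 2) :
    4 * (Real.log 2 - Real.log (1 + 2 * Real.sqrt (ε * (1 - ε)))) ≥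
      (Real.log 2 + ε * Real.log ε + (1 - ε) * Real.log (1 - ε))
        - Real.log 2 - Real.log (Real.sqrt (ε * (1 - ε))) := by
  obtain ⟨v, hv0, hv1, rfl⟩ := exists_bscCrossover_eq (by linarith) h2
  change zeroRateFeedbackExponent (bscCrossover v) ≤
    4 * zeroRateRandomCodingExponent (bscCrossover v)
  rw [zeroRateFeedbackExponent_bscCrossover (by linarith) hv1,
    zeroRateRandomCodingExponent_bscCrossover (by nlinarith), div_mul_eq_mul_div,
    div_le_iff₀ (by positivity)]
  linarith [mul_log_one_add_sub_log_one_sub_le_two_mul_log_one_add_sq hv0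
    (le_of_le_bscCrossover hv1 h1)]
end

section
/- For ε ∈ (0, 1/2), with C(ε) = ln 2 + ε ln ε + (1−ε) ln(1−ε), the ratio E_F(0)/E_r(0) = (C(ε) − ln 2 − ln√(ε(1−ε))) / (ln 2 − ln(1 + 2√(ε(1−ε)))) tends to a finite limit as ε → 1/2⁻, and this limit is at most 4. -/
/-!
With `δ = 1/2 - ε` the numerator is `δ · (log (1 - ε) - log ε)`, and the denominator is `-log u`
for `u = (1 + Z)/2`, where `Z = 2√(ε(1 - ε))` is the Bhattacharyya parameter of the channel.
Since `u (1 - u) = δ²`, the ratio factors as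
`((log (1 - ε) - log ε) / δ) · u · ((u - 1) / log u)`.
As `ε → 1/2` we have `u → 1`, so the three factors tend to `4` (the derivative of
`log ε - log (1 - ε)` at `1/2`), `1`, and `1` (the reciprocal of the derivative of `log` at `1`).
The limit is therefore exactly `4`.
-/

open Filter Real Set Topology

namespace Real

theorem tendsto_sub_one_div_log_nhdsNE_one :
    Tendsto (fun u : ℝ => (u - 1) / log u) (𝓝[≠] 1) (𝓝 1) := by
  have hslope := (hasDerivAt_iff_tendsto_slope.mp (hasDerivAt_log one_ne_zero)).inv₀ (by simp)
  simpa [slope_def_field] using hslope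

theorem tendsto_log_one_sub_sub_log_div_half_sub :
    Tendsto (fun ε : ℝ => (log (1 - ε) - log ε) / (1 / 2 - ε)) (𝓝[≠] (1 / 2)) (𝓝 4) := by
  have hderiv : HasDerivAt (fun ε : ℝ => log ε - log (1 - ε)) 4 (1 / 2) := by
    have h : HasDerivAt (fun ε : ℝ => log ε - log (1 - ε))
        ((1 / 2)⁻¹ - -1 / (1 - 1 / 2)) (1 / 2) :=
      (hasDerivAt_log (by norm_num)).sub
        (((hasDerivAt_id (1 / 2 : ℝ)).const_sub 1).log (by norm_num))
    convert h using 1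
    norm_num
  refine (hasDerivAt_iff_tendsto_slope.mp hderiv).congr fun ε => ?_
  rw [slope_def_field, ← neg_div_neg_eq]
  norm_num

theorem mul_log_add_one_sub_mul_log_sub_log_sqrt {ε : ℝ} (h₀ : 0 < ε) (h₁ : ε < 1) :
    ε * log ε + (1 - ε) * log (1 - ε) - log √(ε * (1 - ε)) =
      (1 / 2 - ε) * (log (1 - ε) - log ε) := by
  rw [log_sqrt (by nlinarith), log_mul h₀.ne' (by linarith)]
  ring

end Real

noncomputable def bhattacharyya (ε : ℝ) : ℝ := 2 * √(ε * (1 - ε))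

theorem bhattacharyya_sq {ε : ℝ} (h₀ : 0 ≤ ε) (h₁ : ε ≤ 1) :
    bhattacharyya ε ^ 2 = 4 * ε * (1 - ε) := by
  rw [bhattacharyya, mul_pow, sq_sqrt (mul_nonneg h₀ (sub_nonneg.mpr h₁))]
  ring

theorem bhattacharyya_eq_one_iff {ε : ℝ} : bhattacharyya ε = 1 ↔ ε = 1 / 2 := by
  rw [bhattacharyya, mul_comm, ← eq_div_iff two_ne_zero,
    sqrt_eq_iff_mul_self_eq_of_pos (by norm_num)]
  constructor
  · intro h
    nlinarith
  · rintro rfl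
    norm_num

theorem tendsto_half_one_add_bhattacharyya :
    Tendsto (fun ε => (1 + bhattacharyya ε) / 2) (𝓝[≠] (1 / 2)) (𝓝[≠] 1) := by
  refine tendsto_nhdsWithin_of_tendsto_nhds_of_eventually_within _ ?_ ?_
  · have hcont : Continuous fun ε => (1 + bhattacharyya ε) / 2 := by
      unfold bhattacharyya
      fun_prop
    have h := (hcont.tendsto (1 / 2)).mono_left (nhdsWithin_le_nhds (s := {1 / 2}ᶜ))
    rwa [bhattacharyya_eq_one_iff.mpr rfl, one_add_one_eq_two, div_self two_ne_zero] at h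
  · filter_upwards [self_mem_nhdsWithin] with ε hε
    have hZ : bhattacharyya ε ≠ 1 := fun h => hε (bhattacharyya_eq_one_iff.mp h)
    simp only [mem_compl_iff, mem_singleton_iff]
    contrapose! hZ
    linarith

theorem one_sub_mul_self_half_one_add_bhattacharyya {ε : ℝ} (h₀ : 0 ≤ ε) (h₁ : ε ≤ 1) :
    (1 - (1 + bhattacharyya ε) / 2) * ((1 + bhattacharyya ε) / 2) = (1 / 2 - ε) ^ 2 := by
  linear_combination (-1 / 4 : ℝ) * bhattacharyya_sq h₀ h₁

theorem log_two_sub_log_one_add_bhattacharyya (ε : ℝ) :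
    log 2 - log (1 + bhattacharyya ε) = -log ((1 + bhattacharyya ε) / 2) := by
  have hpos : 0 < 1 + bhattacharyya ε := by
    unfold bhattacharyya
    positivity
  rw [log_div hpos.ne' two_ne_zero]
  ring

theorem zero_rate_exponent_ratio_eq {ε : ℝ} (h₀ : 0 < ε) (h₁ : ε < 1) (hε : ε ≠ 1 / 2) :
    (log 2 + ε * log ε + (1 - ε) * log (1 - ε) - log 2 - log √(ε * (1 - ε))) /
        (log 2 - log (1 + bhattacharyya ε)) =
      (log (1 - ε) - log ε) / (1 / 2 - ε) *
        ((1 + bhattacharyya ε) / 2 *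
          (((1 + bhattacharyya ε) / 2 - 1) / log ((1 + bhattacharyya ε) / 2))) := by
  set u := (1 + bhattacharyya ε) / 2
  have hδ : 1 / 2 - ε ≠ 0 := sub_ne_zero.mpr hε.symm
  have hsq : (1 - u) * u = (1 / 2 - ε) ^ 2 :=
    one_sub_mul_self_half_one_add_bhattacharyya h₀.le h₁.le
  calc (log 2 + ε * log ε + (1 - ε) * log (1 - ε) - log 2 - log √(ε * (1 - ε))) /
        (log 2 - log (1 + bhattacharyya ε))
      = (1 / 2 - ε) * (log (1 - ε) - log ε) / -log u := by
        rw [log_two_sub_log_one_add_bhattacharyya,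
          ← mul_log_add_one_sub_mul_log_sub_log_sqrt h₀ h₁]
        ring
    _ = (log (1 - ε) - log ε) / (1 / 2 - ε) * -((1 - u) * u) / log u := by
        rw [hsq, div_neg]
        field_simp
    _ = (log (1 - ε) - log ε) / (1 / 2 - ε) * (u * ((u - 1) / log u)) := by ring

theorem bsc_zero_rate_ratio_limit :
    ∃ l : ℝ, Filter.Tendsto
        (fun ε : ℝ =>
          ((Real.log 2 + ε * Real.log ε + (1 - ε) * Real.log (1 - ε))
              - Real.log 2 - Real.log (Real.sqrt (ε * (1 - ε)))) /
            (Real.log 2 - Real.log (1 + 2 * Real.sqrt (ε * (1 - ε)))))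
        (nhdsWithin (1 / 2) (Set.Ioo 0 (1 / 2))) (nhds l) ∧ l ≤ 4 := by
  refine ⟨4, ?_, le_rfl⟩
  have hlim := tendsto_log_one_sub_sub_log_div_half_sub.mul
    ((tendsto_half_one_add_bhattacharyya.mono_right nhdsWithin_le_nhds).mul
      (tendsto_sub_one_div_log_nhdsNE_one.comp tendsto_half_one_add_bhattacharyya))
  rw [mul_one, mul_one] at hlim
  refine (hlim.mono_left (nhdsWithin_mono _ fun ε hε => hε.2.ne)).congr' ?_
  filter_upwards [self_mem_nhdsWithin] with ε ⟨h₀, h₁⟩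
  exact (zero_rate_exponent_ratio_eq h₀ (by linarith) h₁.ne).symm
end
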